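/- Let (X, d_X, f_X) be an augmented metric space in which d_X is an ultrametric (d_X(x, x'') ≤ max(d_X(x, x'), d_X(x', x'')) for all x, x', x'' ∈ X), and let < be any total order on X compatible with f_X. Then the zeroth component module M of (X, d_X, f_X) is interval decomposable; indeed M ≅ ⊕_{x ∈ X} I^{I_x^<}, where each I_x^< is an infinite rectangle: I_x^< = [f_X(x), ∞) × [0, r_x) with r_x := min{d_X(x, x') : x' < x} when x is not the <-least point, and I_x^< = [f_X(x), ∞) × [0, ∞) for the <-least point x. -/

import Mathlib

open CategoryTheory
open scoped Classical

universe u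

/-- We regard the poset `ℝ²` (with the product order) as a category. -/
instance : CategoryTheory.Category (ℝ × ℝ) := Preorder.smallCategory _

section conn

variable {X : Type u} [MetricSpace X]

/-- One step of an `ε`-chain inside `S`. -/
def chainRel (S : Set X) (ε : ℝ) (a b : X) : Prop :=
  a ∈ S ∧ b ∈ S ∧ dist a b ≤ ε

/-- `x` and `y` are `ε`-connected in `S`: there is a finite chain from `x` to `y` inside `S`
whose consecutive points are at distance at most `ε`. -/
def epsConn (S : Set X) (ε : ℝ) (x y : X) : Prop :=
  x ∈ S ∧ y ∈ S ∧ Relation.ReflTransGen (chainRel S ε) x y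

/-- The sublevel set `X_σ` of `f`. -/
def sublevel (f : X → ℝ) (σ : ℝ) : Set X := {x | f x ≤ σ}

lemma epsConn_refl {S : Set X} {ε : ℝ} {x : X} (hx : x ∈ S) : epsConn S ε x x :=
  ⟨hx, hx, Relation.ReflTransGen.refl⟩

lemma epsConn_symm {S : Set X} {ε : ℝ} {x y : X} (h : epsConn S ε x y) :
    epsConn S ε y x := by
  obtain ⟨hx, hy, hc⟩ := h
  refine ⟨hy, hx, ?_⟩
  have hsym : Symmetric (chainRel S ε) := by
    rintro a b ⟨ha, hb, hd⟩
    exact ⟨hb, ha, by rwa [dist_comm]⟩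
  induction hc with
  | refl => exact Relation.ReflTransGen.refl
  | tail _ hbc ih => exact Relation.ReflTransGen.head (hsym hbc) (ih hbc.1)

lemma epsConn_trans {S : Set X} {ε : ℝ} {x y z : X}
    (h1 : epsConn S ε x y) (h2 : epsConn S ε y z) : epsConn S ε x z :=
  ⟨h1.1, h2.2.1, h1.2.2.trans h2.2.2⟩

lemma epsConn_mono {f : X → ℝ} {σ σ' ε ε' : ℝ} (hσ : σ ≤ σ') (hε : ε ≤ ε') {x y : X}
    (h : epsConn (sublevel f σ) ε x y) : epsConn (sublevel f σ') ε' x y := by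
  obtain ⟨hx, hy, hc⟩ := h
  refine ⟨le_trans hx hσ, le_trans hy hσ, Relation.ReflTransGen.mono ?_ _ _ hc⟩
  rintro a b ⟨ha, hb, hd⟩
  exact ⟨le_trans ha hσ, le_trans hb hσ, le_trans hd hε⟩

/-- The `ε`-connectedness class of `x` in the sublevel set `X_σ`. -/
def connClass (f : X → ℝ) (σ ε : ℝ) (x : X) : Set X :=
  {y | epsConn (sublevel f σ) ε x y}

/-- The set of `ε`-connectedness classes of the sublevel set `X_σ` (empty when `ε < 0`). -/
def classes (f : X → ℝ) (σ ε : ℝ) : Set (Set X) :=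
  {C | 0 ≤ ε ∧ ∃ x, f x ≤ σ ∧ C = connClass f σ ε x}

lemma connClass_eq {f : X → ℝ} {σ ε : ℝ} {x y : X}
    (h : epsConn (sublevel f σ) ε x y) : connClass f σ ε x = connClass f σ ε y := by
  ext z
  exact ⟨fun hz => epsConn_trans (epsConn_symm h) hz, fun hz => epsConn_trans h hz⟩

end conn

section staircase

variable {X : Type u} [MetricSpace X] [LinearOrder X]

/-- The elder-rule staircase `I_x` of a point `x` of an augmented metric space:
all `(σ, ε)` with `ε ≥ 0` such that `x ∈ X_σ` and `x` is the least element of its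
`ε`-connectedness class in `X_σ`. -/
def staircase (f : X → ℝ) (x : X) : Set (ℝ × ℝ) :=
  {p | 0 ≤ p.2 ∧ f x ≤ p.1 ∧ ∀ y, epsConn (sublevel f p.1) p.2 x y → x ≤ y}

lemma staircase_convex (f : X → ℝ) :
    ∀ x : X, ∀ a ∈ staircase f x, ∀ b ∈ staircase f x, ∀ c, a ≤ c → c ≤ b →
      c ∈ staircase f x := by
  rintro x a ⟨ha0, haf, _⟩ b ⟨_, _, hb⟩ c hac hcb
  exact ⟨le_trans ha0 hac.2, le_trans haf hac.1,
    fun y hy => hb y (epsConn_mono hcb.1 hcb.2 hy)⟩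

end staircase

section module

variable {X : Type u} [MetricSpace X] (𝔽 : Type u) [Field 𝔽]

/-- The structure map between the sets of `ε`-connectedness classes, for grades `p ≤ q`. -/
noncomputable def classMap (f : X → ℝ) {p q : ℝ × ℝ} (h : p ≤ q)
    (C : classes f p.1 p.2) : classes f q.1 q.2 :=
  ⟨connClass f q.1 q.2 C.2.2.choose,
    le_trans C.2.1 h.2, C.2.2.choose, le_trans C.2.2.choose_spec.1 h.1, rfl⟩

lemma classMap_id (f : X → ℝ) (p : ℝ × ℝ) :
    classMap f (le_refl p) = (id : classes f p.1 p.2 → classes f p.1 p.2) := by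
  funext C
  apply Subtype.ext
  exact (C.2.2.choose_spec.2).symm

lemma classMap_comp (f : X → ℝ) {p q r : ℝ × ℝ} (hpq : p ≤ q) (hqr : q ≤ r) :
    classMap f (le_trans hpq hqr) = classMap f hqr ∘ classMap f hpq := by
  funext C
  apply Subtype.ext
  set x := C.2.2.choose with hxdef
  set C' := classMap f hpq C with hC'def
  set x₁ := C'.2.2.choose with hx₁def
  have hx₁spec := C'.2.2.choose_spec
  have hCq : (C' : Set X) = connClass f q.1 q.2 x := rfl
  have hcc : connClass f q.1 q.2 x = connClass f q.1 q.2 x₁ := by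
    rw [← hCq]; exact hx₁spec.2
  have hmem : epsConn (sublevel f q.1) q.2 x x₁ := by
    have h1 : x₁ ∈ connClass f q.1 q.2 x₁ := epsConn_refl hx₁spec.1
    rw [← hcc] at h1
    exact h1
  exact connClass_eq (epsConn_mono hqr.1 hqr.2 hmem)

/-- The zeroth component module of an augmented metric space `(X, d_X, f)`, as a functor
`ℝ² ⥤ Vec_𝔽`: at grade `(σ, ε)` it is the free `𝔽`-vector space on the set of
`ε`-connectedness classes of `X_σ` (the zero space when `ε < 0`), with structure maps
sending each class to the class containing it.  It is isomorphic to the zeroth persistent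
homology of the Rips bifiltration of `(X, d_X, f)`. -/
noncomputable def zerothModule (f : X → ℝ) : (ℝ × ℝ) ⥤ ModuleCat.{u} 𝔽 where
  obj p := ModuleCat.of 𝔽 ((classes f p.1 p.2) →₀ 𝔽)
  map {p q} h := ModuleCat.ofHom (Finsupp.lmapDomain 𝔽 𝔽 (classMap f h.le))
  map_id p := by
    show ModuleCat.ofHom (Finsupp.lmapDomain 𝔽 𝔽 (classMap f (le_refl p))) = _
    rw [classMap_id, Finsupp.lmapDomain_id]
    rfl
  map_comp {p q r} hpq hqr := by
    show ModuleCat.ofHom (Finsupp.lmapDomain 𝔽 𝔽 (classMap f (le_trans hpq.le hqr.le))) = _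
    rw [classMap_comp f hpq.le hqr.le, Finsupp.lmapDomain_comp]
    rfl

/-- The direct sum `⊕ᵢ I^{J i}` of the interval modules supported on the (convex) subsets
`J i` of a poset `P`, as a functor `P ⥤ Vec_𝔽`.  At `p` its value is (canonically isomorphic
to) the direct sum of one copy of `𝔽` for every `i` with `p ∈ J i`, and the structure maps
are identities on the summands supported at both endpoints, and zero otherwise. -/
noncomputable def sumIntervalModule {P : Type} [Preorder P]
    {ι : Type u} (J : ι → Set P)
    (hJ : ∀ i, ∀ a ∈ J i, ∀ b ∈ J i, ∀ c, a ≤ c → c ≤ b → c ∈ J i) :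
    P ⥤ ModuleCat.{u} 𝔽 where
  obj p := ModuleCat.of 𝔽 (∀ i : ι, PLift (p ∈ J i) → 𝔽)
  map {p q} h :=
    ModuleCat.ofHom
    { toFun := fun g i _ => if hp : p ∈ J i then g i ⟨hp⟩ else 0
      map_add' := by
        intro g₁ g₂
        funext i hq
        show (if hp : p ∈ J i then (g₁ + g₂) i ⟨hp⟩ else 0)
            = (if hp : p ∈ J i then g₁ i ⟨hp⟩ else 0) + (if hp : p ∈ J i then g₂ i ⟨hp⟩ else 0)
        by_cases hp : p ∈ J i
        · simp only [dif_pos hp]; rfl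
        · simp only [dif_neg hp]; rw [add_zero]
      map_smul' := by
        intro c g
        funext i hq
        show (if hp : p ∈ J i then (c • g) i ⟨hp⟩ else 0)
            = c • (if hp : p ∈ J i then g i ⟨hp⟩ else 0)
        by_cases hp : p ∈ J i
        · simp only [dif_pos hp]; rfl
        · simp only [dif_neg hp]; rw [smul_zero] }
  map_id p := by
    refine ModuleCat.hom_ext (LinearMap.ext fun g => ?_)
    funext i hq
    show (if hp : p ∈ J i then g i ⟨hp⟩ else 0) = g i hq
    rw [dif_pos hq.down]
  map_comp {p q r} hpq hqr := by
    refine ModuleCat.hom_ext (LinearMap.ext fun g => ?_)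
    funext i hr
    show (if hp : p ∈ J i then g i ⟨hp⟩ else 0)
        = (if hq : q ∈ J i then (if hp : p ∈ J i then g i ⟨hp⟩ else 0) else 0)
    by_cases hp : p ∈ J i
    · have hq : q ∈ J i := hJ i p hp r hr.down q hpq.le hqr.le
      simp only [dif_pos hp, dif_pos hq]
    · by_cases hq : q ∈ J i
      · simp only [dif_neg hp, dif_pos hq]
      · simp only [dif_neg hp, dif_neg hq]

end module


section aux

variable {X : Type u} [MetricSpace X] [LinearOrder X] [Fintype X]

lemma dist_le_of_chain
    (hult : ∀ x x' x'' : X, dist x x'' ≤ max (dist x x') (dist x' x''))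
    {S : Set X} {ε : ℝ} {x y : X}
    (h : Relation.ReflTransGen (chainRel S ε) x y) : x = y ∨ dist x y ≤ ε := by
  induction h with
  | refl => exact Or.inl rfl
  | @tail b c _ h2 ih =>
    rcases ih with rfl | hd
    · exact Or.inr h2.2.2
    · exact Or.inr ((hult x b c).trans (max_le hd h2.2.2))

lemma epsConn_of_dist {f : X → ℝ} {σ ε : ℝ} {x y : X} (hx : f x ≤ σ) (hy : f y ≤ σ)
    (hd : dist x y ≤ ε) : epsConn (sublevel f σ) ε x y :=
  ⟨hx, hy, Relation.ReflTransGen.single ⟨hx, hy, hd⟩⟩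

variable (f : X → ℝ)

lemma f_mono (hcompat : ∀ x y : X, f x < f y → x < y) {a b : X} (h : a ≤ b) : f a ≤ f b := by
  by_contra hc
  exact absurd h (not_le.mpr (hcompat b a (not_le.mp hc)))

lemma exists_parent (x : X) : ∃ y : X, y ≤ x ∧
    ((∃ z, z < x) → y < x ∧ ∀ z, z < x → dist x y ≤ dist x z) := by
  by_cases h : ∃ z, z < x
  · obtain ⟨b, hb, hmin⟩ := Finset.exists_min_image (Finset.univ.filter (· < x))
      (fun z => dist x z) ⟨h.choose, by simp [h.choose_spec]⟩
    simp only [Finset.mem_filter, Finset.mem_univ, true_and] at hb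
    exact ⟨b, hb.le, fun _ => ⟨hb, fun z hz => hmin z (by simp [hz])⟩⟩
  · exact ⟨x, le_rfl, fun hc => absurd hc h⟩

/-- The closest strictly smaller point (itself if `x` is the least point). -/
noncomputable def parent (x : X) : X := (exists_parent x).choose

lemma parent_spec {x : X} (h : ∃ z, z < x) :
    parent x < x ∧ ∀ z, z < x → dist x (parent x) ≤ dist x z :=
  (exists_parent x).choose_spec.2 h

lemma parent_le (x : X) : parent x ≤ x := (exists_parent x).choose_spec.1

lemma mem_staircase_iff
    (hult : ∀ x x' x'' : X, dist x x'' ≤ max (dist x x') (dist x' x''))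
    (hcompat : ∀ x y : X, f x < f y → x < y) {p : ℝ × ℝ} {x : X} :
    p ∈ staircase f x ↔ 0 ≤ p.2 ∧ f x ≤ p.1 ∧ ∀ z, z < x → p.2 < dist x z := by
  constructor
  · rintro ⟨h0, hf, hmin⟩
    refine ⟨h0, hf, fun z hz => ?_⟩
    by_contra hc
    push_neg at hc
    exact absurd (hmin z (epsConn_of_dist hf ((f_mono f hcompat hz.le).trans hf) hc))
      (not_le.mpr hz)
  · rintro ⟨h0, hf, hd⟩
    refine ⟨h0, hf, fun y hy => ?_⟩
    by_contra hc
    have hyx : y < x := not_le.mp hc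
    rcases dist_le_of_chain hult hy.2.2 with heq | hdist
    · exact hc heq.le
    · exact absurd hdist (not_le.mpr (hd y hyx))

/-- The class of `x` as an element of `classes f σ ε`. -/
def cls (p : ℝ × ℝ) (x : X) (hf : f x ≤ p.1) (hε : 0 ≤ p.2) : ↥(classes f p.1 p.2) :=
  ⟨connClass f p.1 p.2 x, hε, x, hf, rfl⟩

lemma cls_eq_of_epsConn {p : ℝ × ℝ} {x y : X} (hx : f x ≤ p.1) (hy : f y ≤ p.1) (hε : 0 ≤ p.2)
    (h : epsConn (sublevel f p.1) p.2 x y) : cls f p x hx hε = cls f p y hy hε :=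
  Subtype.ext (connClass_eq h)

lemma epsConn_of_cls_eq {p : ℝ × ℝ} {x y : X} {hx : f x ≤ p.1} {hy : f y ≤ p.1} {hε : 0 ≤ p.2}
    (h : cls f p x hx hε = cls f p y hy hε) : epsConn (sublevel f p.1) p.2 x y := by
  have h' : connClass f p.1 p.2 x = connClass f p.1 p.2 y := congrArg Subtype.val h
  have : y ∈ connClass f p.1 p.2 y := epsConn_refl hy
  rw [← h'] at this
  exact this

lemma classMap_cls {p q : ℝ × ℝ} (hpq : p ≤ q) {x : X} (hf : f x ≤ p.1) (hε : 0 ≤ p.2)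
    (hf' : f x ≤ q.1) (hε' : 0 ≤ q.2) :
    classMap f hpq (cls f p x hf hε) = cls f q x hf' hε' := by
  apply Subtype.ext
  set C := cls f p x hf hε with hC
  show connClass f q.1 q.2 C.2.2.choose = connClass f q.1 q.2 x
  have hspec := C.2.2.choose_spec
  have hx : epsConn (sublevel f p.1) p.2 C.2.2.choose x := by
    have hmem : x ∈ connClass f p.1 p.2 C.2.2.choose := by
      rw [← hspec.2]
      exact epsConn_refl hf
    exact hmem
  exact connClass_eq (epsConn_mono hpq.1 hpq.2 hx)

variable (𝔽 : Type u) [Field 𝔽]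

/-- The elder-rule basis vector attached to `x` at grade `p`. -/
noncomputable def elderVec (p : ℝ × ℝ) (x : X) (hf : f x ≤ p.1)
    (hfp : f (parent x) ≤ p.1) (hε : 0 ≤ p.2) : ↥(classes f p.1 p.2) →₀ 𝔽 :=
  Finsupp.single (cls f p x hf hε) 1 -
    if _ : ∃ z, z < x then Finsupp.single (cls f p (parent x) hfp hε) 1 else 0

lemma elderVec_map {p q : ℝ × ℝ} (hpq : p ≤ q) {x : X}
    (hf : f x ≤ p.1) (hfp : f (parent x) ≤ p.1) (hε : 0 ≤ p.2)
    (hf' : f x ≤ q.1) (hfp' : f (parent x) ≤ q.1) (hε' : 0 ≤ q.2) :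
    Finsupp.lmapDomain 𝔽 𝔽 (classMap f hpq) (elderVec f 𝔽 p x hf hfp hε)
      = elderVec f 𝔽 q x hf' hfp' hε' := by
  rw [elderVec, elderVec, map_sub, Finsupp.lmapDomain_apply, Finsupp.mapDomain_single,
    classMap_cls f hpq hf hε hf' hε']
  congr 1
  by_cases h : ∃ z, z < x
  · rw [dif_pos h, dif_pos h, Finsupp.lmapDomain_apply, Finsupp.mapDomain_single,
      classMap_cls f hpq hfp hε hfp' hε']
  · rw [dif_neg h, dif_neg h, map_zero]

lemma elderVec_eq_zero
    (hult : ∀ x x' x'' : X, dist x x'' ≤ max (dist x x') (dist x' x''))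
    (hcompat : ∀ x y : X, f x < f y → x < y) {q : ℝ × ℝ} {x : X}
    (hf : f x ≤ q.1) (hfp : f (parent x) ≤ q.1) (hε : 0 ≤ q.2)
    (hq : q ∉ staircase f x) : elderVec f 𝔽 q x hf hfp hε = 0 := by
  rw [mem_staircase_iff f hult hcompat] at hq
  push_neg at hq
  obtain ⟨z, hz, hdz⟩ := hq hε hf
  have hex : ∃ z, z < x := ⟨z, hz⟩
  rw [elderVec, dif_pos hex]
  have hcls : cls f q x hf hε = cls f q (parent x) hfp hε :=
    cls_eq_of_epsConn f hf hfp hε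
      (epsConn_of_dist hf hfp (((parent_spec hex).2 z hz).trans hdz))
  rw [hcls, sub_self]

/-- The elder-rule change of basis, as a linear map from the direct sum of staircase interval
modules to the zeroth component module, at grade `p`. -/
noncomputable def psi (hcompat : ∀ x y : X, f x < f y → x < y) (p : ℝ × ℝ) :
    ((x : X) → PLift (p ∈ staircase f x) → 𝔽) →ₗ[𝔽] (↥(classes f p.1 p.2) →₀ 𝔽) where
  toFun g := ∑ x : X, if hx : p ∈ staircase f x then
      g x ⟨hx⟩ • elderVec f 𝔽 p x hx.2.1 ((f_mono f hcompat (parent_le x)).trans hx.2.1) hx.1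
    else 0
  map_add' g₁ g₂ := by
    rw [← Finset.sum_add_distrib]
    refine Finset.sum_congr rfl fun x _ => ?_
    by_cases hx : p ∈ staircase f x
    · rw [dif_pos hx, dif_pos hx, dif_pos hx, ← add_smul]
      rfl
    · rw [dif_neg hx, dif_neg hx, dif_neg hx, add_zero]
  map_smul' c g := by
    rw [RingHom.id_apply, Finset.smul_sum]
    refine Finset.sum_congr rfl fun x _ => ?_
    by_cases hx : p ∈ staircase f x
    · rw [dif_pos hx, dif_pos hx, smul_smul]
      rfl
    · rw [dif_neg hx, dif_neg hx, smul_zero]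

lemma psi_apply (hcompat : ∀ x y : X, f x < f y → x < y) (p : ℝ × ℝ)
    (g : (x : X) → PLift (p ∈ staircase f x) → 𝔽) :
    psi f 𝔽 hcompat p g = ∑ x : X, if hx : p ∈ staircase f x then
      g x ⟨hx⟩ • elderVec f 𝔽 p x hx.2.1 ((f_mono f hcompat (parent_le x)).trans hx.2.1) hx.1
    else 0 := rfl

lemma psi_single (hcompat : ∀ x y : X, f x < f y → x < y) (p : ℝ × ℝ) (x : X)
    (hp : p ∈ staircase f x) :
    psi f 𝔽 hcompat p (fun y _ => if y = x then 1 else 0)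
      = elderVec f 𝔽 p x hp.2.1 ((f_mono f hcompat (parent_le x)).trans hp.2.1) hp.1 := by
  rw [psi_apply, Finset.sum_eq_single x]
  · rw [dif_pos hp, if_pos rfl, one_smul]
  · intro y _ hyx
    by_cases hy : p ∈ staircase f y
    · rw [dif_pos hy, if_neg hyx, zero_smul]
    · rw [dif_neg hy]
  · exact fun h => absurd (Finset.mem_univ x) h

lemma psi_natural
    (hult : ∀ x x' x'' : X, dist x x'' ≤ max (dist x x') (dist x' x''))
    (hcompat : ∀ x y : X, f x < f y → x < y) {p q : ℝ × ℝ} (hpq : p ≤ q)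
    (g : (x : X) → PLift (p ∈ staircase f x) → 𝔽) :
    Finsupp.lmapDomain 𝔽 𝔽 (classMap f hpq) (psi f 𝔽 hcompat p g)
      = psi f 𝔽 hcompat q (fun x _ => if hx : p ∈ staircase f x then g x ⟨hx⟩ else 0) := by
  rw [psi_apply, psi_apply, map_sum]
  refine Finset.sum_congr rfl fun x _ => ?_
  by_cases hp : p ∈ staircase f x
  · by_cases hq : q ∈ staircase f x
    · rw [dif_pos hp, dif_pos hq, map_smul,
        elderVec_map f 𝔽 hpq hp.2.1 ((f_mono f hcompat (parent_le x)).trans hp.2.1) hp.1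
          hq.2.1 ((f_mono f hcompat (parent_le x)).trans hq.2.1) hq.1]
      rw [dif_pos hp]
    · rw [dif_pos hp, dif_neg hq, map_smul,
        elderVec_map f 𝔽 hpq hp.2.1 ((f_mono f hcompat (parent_le x)).trans hp.2.1) hp.1
          (hp.2.1.trans hpq.1) ((f_mono f hcompat (parent_le x)).trans (hp.2.1.trans hpq.1))
          (hp.1.trans hpq.2),
        elderVec_eq_zero f 𝔽 hult hcompat _ _ _ hq, smul_zero]
  · by_cases hq : q ∈ staircase f x
    · rw [dif_neg hp, dif_pos hq, map_zero, dif_neg hp, zero_smul]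
    · rw [dif_neg hp, dif_neg hq, map_zero]

lemma psi_surjective (hcompat : ∀ x y : X, f x < f y → x < y) (p : ℝ × ℝ) :
    Function.Surjective (psi f 𝔽 hcompat p) := by
  have key : ∀ x : X, ∀ (hf : f x ≤ p.1) (hε : 0 ≤ p.2),
      Finsupp.single (cls f p x hf hε) (1 : 𝔽) ∈ LinearMap.range (psi f 𝔽 hcompat p) := by
    intro x
    induction x using WellFoundedLT.induction with
    | ind x IH =>
      intro hf hε
      by_cases hp : p ∈ staircase f x
      · have hrange : elderVec f 𝔽 p x hf ((f_mono f hcompat (parent_le x)).trans hf) hε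
            ∈ LinearMap.range (psi f 𝔽 hcompat p) :=
          ⟨fun y _ => if y = x then 1 else 0, psi_single f 𝔽 hcompat p x hp⟩
        by_cases hex : ∃ z, z < x
        · have heq : Finsupp.single (cls f p x hf hε) (1 : 𝔽)
              = elderVec f 𝔽 p x hf ((f_mono f hcompat (parent_le x)).trans hf) hε
                + Finsupp.single
                    (cls f p (parent x) ((f_mono f hcompat (parent_le x)).trans hf) hε) 1 := by
            rw [elderVec, dif_pos hex, sub_add_cancel]
          rw [heq]
          exact add_mem hrange
            (IH (parent x) (parent_spec hex).1 ((f_mono f hcompat (parent_le x)).trans hf) hε)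
        · have heq : Finsupp.single (cls f p x hf hε) (1 : 𝔽)
              = elderVec f 𝔽 p x hf ((f_mono f hcompat (parent_le x)).trans hf) hε := by
            rw [elderVec, dif_neg hex, sub_zero]
          rw [heq]
          exact hrange
      · have hnot : ¬ ∀ y, epsConn (sublevel f p.1) p.2 x y → x ≤ y :=
          fun hmin => hp ⟨hε, hf, hmin⟩
        push_neg at hnot
        obtain ⟨z, hconn, hz⟩ := hnot
        have hfz : f z ≤ p.1 := hconn.2.1
        rw [cls_eq_of_epsConn f hf hfz hε hconn]
        exact IH z hz hfz hε
  intro v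
  induction v using Finsupp.induction with
  | zero => exact ⟨0, map_zero _⟩
  | single_add C b v _ _ IH =>
    obtain ⟨g, hg⟩ := IH
    obtain ⟨hε, x, hf, hC⟩ := C.2
    have hCx : C = cls f p x hf hε := Subtype.ext hC
    have hsm : Finsupp.single C b = b • Finsupp.single (cls f p x hf hε) (1 : 𝔽) := by
      rw [Finsupp.smul_single, smul_eq_mul, mul_one, hCx]
    obtain ⟨g', hg'⟩ := key x hf hε
    exact ⟨b • g' + g, by rw [map_add, map_smul, hg', hg, hsm]⟩

lemma psi_injective (hcompat : ∀ x y : X, f x < f y → x < y) (p : ℝ × ℝ) :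
    Function.Injective (psi f 𝔽 hcompat p) := by
  rw [← LinearMap.ker_eq_bot, LinearMap.ker_eq_bot']
  intro g hg
  have key : ∀ x : X, ∀ h : p ∈ staircase f x, g x ⟨h⟩ = 0 := by
    intro x
    induction x using WellFoundedGT.induction with
    | ind x IH =>
      intro hx
      set C₀ := cls f p x hx.2.1 hx.1 with hC₀
      have h0 : (psi f 𝔽 hcompat p g) C₀ = 0 := by rw [hg]; rfl
      rw [psi_apply, Finset.sum_apply'] at h0
      rw [Finset.sum_eq_single x] at h0
      · rw [dif_pos hx] at h0
        rw [Finsupp.smul_apply, elderVec, Finsupp.sub_apply, Finsupp.single_apply,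
          if_pos rfl] at h0
        have hB : (if _ : ∃ z, z < x then
            Finsupp.single (cls f p (parent x)
              ((f_mono f hcompat (parent_le x)).trans hx.2.1) hx.1) (1 : 𝔽) else 0) C₀ = 0 := by
          by_cases hex : ∃ z, z < x
          · rw [dif_pos hex, Finsupp.single_apply, if_neg]
            intro hpc
            have hconn := epsConn_of_cls_eq f hpc
            have := hx.2.2 (parent x) (epsConn_symm hconn)
            exact absurd ((parent_spec hex).1) (not_lt.mpr this)
          · rw [dif_neg hex]
            rfl
        rw [hB, sub_zero, smul_eq_mul, mul_one] at h0
        exact h0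
      · intro y _ hyx
        by_cases hy : p ∈ staircase f y
        · rw [dif_pos hy, Finsupp.smul_apply, elderVec, Finsupp.sub_apply]
          have hA : (Finsupp.single (cls f p y hy.2.1 hy.1) (1 : 𝔽)) C₀ = 0 := by
            rw [Finsupp.single_apply, if_neg]
            intro hpc
            have hconn := epsConn_of_cls_eq f hpc
            exact hyx (le_antisymm (hy.2.2 x hconn) (hx.2.2 y (epsConn_symm hconn)))
          by_cases hpc : ∃ z, z < y
          · by_cases hB : cls f p (parent y)
                ((f_mono f hcompat (parent_le y)).trans hy.2.1) hy.1 = C₀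
            · have hconn := epsConn_of_cls_eq f hB
              have hxy : x < y := lt_of_le_of_lt (hx.2.2 (parent y) (epsConn_symm hconn))
                (parent_spec hpc).1
              have hgy : g y ⟨hy⟩ = 0 := IH y hxy hy
              rw [hgy, zero_smul]
            · rw [hA, dif_pos hpc, Finsupp.single_apply, if_neg hB, sub_zero, smul_zero]
          · rw [hA, dif_neg hpc]
            show g y ⟨hy⟩ * (0 - (0 : ↥(classes f p.1 p.2) →₀ 𝔽) C₀) = 0
            rw [Finsupp.coe_zero, Pi.zero_apply, sub_zero, mul_zero]
        · rw [dif_neg hy]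
          rfl
      · exact fun h => absurd (Finset.mem_univ x) h
  funext x hpl
  exact key x hpl.down
  
end aux

/-- **Ultrametric case.**  Let `(X, d_X, f)` be an augmented metric space in which `d_X`
is an ultrametric, and `<` any total order on `X` compatible with `f`.  Then every
elder-rule staircase is an infinite rectangle: `I_x = [f x, ∞) × [0, ∞)` for the least
point `x`, and `I_x = [f x, ∞) × [0, r_x)` with `r_x = min {d_X(x, x') : x' < x}` for any
non-least point `x`; moreover the zeroth component module of `(X, d_X, f)` is interval
decomposable, being isomorphic to `⊕_{x ∈ X} I^{I_x}`. -/
theorem zerothModule_iso_sum_staircase_of_ultrametric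
    (𝔽 : Type u) [Field 𝔽] (X : Type u) [Fintype X] [MetricSpace X] [LinearOrder X]
    (f : X → ℝ)
    (hult : ∀ x x' x'' : X, dist x x'' ≤ max (dist x x') (dist x' x''))
    (hcompat : ∀ x y : X, f x < f y → x < y) :
    (∀ x : X, (¬ ∃ y, y < x) →
      staircase f x = Set.Ici (f x) ×ˢ Set.Ici (0 : ℝ)) ∧
    (∀ x : X, (∃ y, y < x) →
      staircase f x
        = Set.Ici (f x) ×ˢ Set.Ico (0 : ℝ) (sInf {d : ℝ | ∃ x', x' < x ∧ d = dist x x'})) ∧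
    Nonempty (zerothModule 𝔽 f ≅ sumIntervalModule 𝔽 (staircase f) (staircase_convex f)) := by
  refine ⟨?_, ?_, ?_⟩
  · intro x hx
    ext p
    simp only [Set.mem_prod, Set.mem_Ici]
    rw [mem_staircase_iff f hult hcompat]
    constructor
    · rintro ⟨h0, hf, -⟩
      exact ⟨hf, h0⟩
    · rintro ⟨hf, h0⟩
      exact ⟨h0, hf, fun z hz => absurd ⟨z, hz⟩ hx⟩
  · intro x hx
    have hs : sInf {d : ℝ | ∃ x', x' < x ∧ d = dist x x'} = dist x (parent x) := by
      apply le_antisymm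
      · exact csInf_le ⟨0, by rintro d ⟨x', _, rfl⟩; exact dist_nonneg⟩
          ⟨parent x, (parent_spec hx).1, rfl⟩
      · exact le_csInf ⟨_, parent x, (parent_spec hx).1, rfl⟩
          (by rintro d ⟨x', hx', rfl⟩; exact (parent_spec hx).2 x' hx')
    ext p
    simp only [Set.mem_prod, Set.mem_Ici, Set.mem_Ico, hs]
    rw [mem_staircase_iff f hult hcompat]
    constructor
    · rintro ⟨h0, hf, hall⟩
      exact ⟨hf, h0, hall (parent x) (parent_spec hx).1⟩
    · rintro ⟨hf, h0, hlt⟩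
      exact ⟨h0, hf, fun z hz => lt_of_lt_of_le hlt ((parent_spec hx).2 z hz)⟩
  · refine ⟨(NatIso.ofComponents
      (fun p => (LinearEquiv.ofBijective (psi f 𝔽 hcompat p)
        ⟨psi_injective f 𝔽 hcompat p, psi_surjective f 𝔽 hcompat p⟩).toModuleIso)
      ?_).symm⟩
    intro p q h
    refine ModuleCat.hom_ext (LinearMap.ext fun g => ?_)
    show psi f 𝔽 hcompat q _ = Finsupp.lmapDomain 𝔽 𝔽 (classMap f h.le) (psi f 𝔽 hcompat p g)
    rw [psi_natural f 𝔽 hult hcompat h.le g]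
    rfl
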